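/- arXiv:1411.2291 — 3 statements merged into one kernel-verified Lean document; each statement's English description precedes it below -/
import Mathlib

section
/- Suppose for all (s,t) the three equations hold: (K'cos θ − 2KH sin θ)cos t = −a₁₁ sin θ cos t − a₁₂ sin θ sin t + a₁₃ cos θ, (K'cos θ − 2KH sin θ)sin t = −a₂₁ sin θ cos t − a₂₂ sin θ sin t + a₂₃ cos θ, and K' sin θ + 2KH cos θ = −a₃₁ sin θ cos t − a₃₂ sin θ sin t + a₃₃ cos θ, where θ : I → ℝ takes values in a set whose image contains a nontrivial interval (equivalently θ' ≠ 0 somewhere so θ is non-constant on a subinterval). Then a₁₂ = a₁₃ = a₂₁ = a₂₃ = a₃₁ = a₃₂ = 0 and a₁₁ = a₂₂, i.e., the matrix A = (a_ij) is diagonal of the form diag(λ, λ, μ). -/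
open Real

/-- If the Gauss map equations □G = AG hold componentwise for all s and t, and θ(I)
    contains a nontrivial interval, then A is diagonal of the form diag(λ, λ, μ). -/
theorem stmt4 (I : Set ℝ) (θ K H : ℝ → ℝ) (A : Matrix (Fin 3) (Fin 3) ℝ)
    (hI : ∃ u v : ℝ, u < v ∧ Set.Ioo u v ⊆ θ '' I)
    (h1 : ∀ s ∈ I, ∀ t : ℝ,
      (deriv K s * Real.cos (θ s) - 2 * K s * H s * Real.sin (θ s)) * Real.cos t =
        -(A 0 0) * Real.sin (θ s) * Real.cos t - A 0 1 * Real.sin (θ s) * Real.sin t +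
        A 0 2 * Real.cos (θ s))
    (h2 : ∀ s ∈ I, ∀ t : ℝ,
      (deriv K s * Real.cos (θ s) - 2 * K s * H s * Real.sin (θ s)) * Real.sin t =
        -(A 1 0) * Real.sin (θ s) * Real.cos t - A 1 1 * Real.sin (θ s) * Real.sin t +
        A 1 2 * Real.cos (θ s))
    (h3 : ∀ s ∈ I, ∀ t : ℝ,
      deriv K s * Real.sin (θ s) + 2 * K s * H s * Real.cos (θ s) =
        -(A 2 0) * Real.sin (θ s) * Real.cos t - A 2 1 * Real.sin (θ s) * Real.sin t +
        A 2 2 * Real.cos (θ s)) :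
    A 0 1 = 0 ∧ A 0 2 = 0 ∧ A 1 0 = 0 ∧ A 1 2 = 0 ∧ A 2 0 = 0 ∧ A 2 1 = 0 ∧
      A 0 0 = A 1 1 := by
  obtain ⟨u, v, huv, hsub⟩ := hI
  -- Main pointwise consequences
  have main : ∀ s ∈ I,
      A 0 1 * Real.sin (θ s) = 0 ∧ A 0 2 * Real.cos (θ s) = 0 ∧
      A 1 0 * Real.sin (θ s) = 0 ∧ A 1 2 * Real.cos (θ s) = 0 ∧
      A 2 0 * Real.sin (θ s) = 0 ∧ A 2 1 * Real.sin (θ s) = 0 ∧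
      A 0 0 * Real.sin (θ s) = A 1 1 * Real.sin (θ s) := by
    intro s hs
    have e10 := h1 s hs 0
    have e1p := h1 s hs π
    have e1h := h1 s hs (π/2)
    have e20 := h2 s hs 0
    have e2p := h2 s hs π
    have e2h := h2 s hs (π/2)
    have e30 := h3 s hs 0
    have e3p := h3 s hs π
    have e3h := h3 s hs (π/2)
    simp only [Real.cos_zero, Real.sin_zero, Real.cos_pi, Real.sin_pi,
      Real.cos_pi_div_two, Real.sin_pi_div_two, mul_zero, mul_one, mul_neg_one,
      zero_add, add_zero, sub_zero, zero_sub, neg_neg] at e10 e1p e1h e20 e2p e2h e30 e3p e3h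
    refine ⟨by linarith, by linarith, by linarith, by linarith, by linarith,
      by linarith, by linarith⟩
  -- a point of Ioo u v where sin ≠ 0, and one where cos ≠ 0
  set m := (u + v) / 2 with hm
  set ε := min ((v - u) / 4) 1 with hε
  have hε0 : 0 < ε := lt_min (by linarith) one_pos
  have hε1 : ε ≤ 1 := min_le_right _ _
  have hεq : ε ≤ (v - u) / 4 := min_le_left _ _
  have hmem1 : m ∈ Set.Ioo u v := ⟨by simp [hm]; linarith, by simp [hm]; linarith⟩
  have hmem2 : m + ε ∈ Set.Ioo u v := ⟨by simp [hm]; linarith, by simp [hm]; linarith⟩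
  have hsinε : Real.sin ε ≠ 0 := by
    have : 0 < Real.sin ε := Real.sin_pos_of_pos_of_lt_pi hε0 (by
      have := Real.pi_gt_three; linarith)
    linarith
  have hpyth : Real.sin m ^ 2 + Real.cos m ^ 2 = 1 := Real.sin_sq_add_cos_sq m
  have hsin : Real.sin m ≠ 0 ∨ Real.sin (m + ε) ≠ 0 := by
    by_contra h
    push_neg at h
    obtain ⟨h1', h2'⟩ := h
    rw [Real.sin_add, h1'] at h2'
    simp at h2'
    rcases h2' with h2' | h2'
    · rw [h1', h2'] at hpyth; norm_num at hpyth
    · exact hsinε h2'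
  have hcos : Real.cos m ≠ 0 ∨ Real.cos (m + ε) ≠ 0 := by
    by_contra h
    push_neg at h
    obtain ⟨h1', h2'⟩ := h
    rw [Real.cos_add, h1'] at h2'
    simp at h2'
    rcases h2' with h2' | h2'
    · rw [h1', h2'] at hpyth; norm_num at hpyth
    · exact hsinε h2'
  -- get s₁ with sin (θ s₁) ≠ 0
  obtain ⟨w1, hw1mem, hw1⟩ : ∃ w ∈ Set.Ioo u v, Real.sin w ≠ 0 := by
    rcases hsin with h | h
    · exact ⟨m, hmem1, h⟩
    · exact ⟨m + ε, hmem2, h⟩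
  obtain ⟨w2, hw2mem, hw2⟩ : ∃ w ∈ Set.Ioo u v, Real.cos w ≠ 0 := by
    rcases hcos with h | h
    · exact ⟨m, hmem1, h⟩
    · exact ⟨m + ε, hmem2, h⟩
  obtain ⟨s1, hs1, hθ1⟩ := hsub hw1mem
  obtain ⟨s2, hs2, hθ2⟩ := hsub hw2mem
  have m1 := main s1 hs1
  have m2 := main s2 hs2
  rw [hθ1] at m1
  rw [hθ2] at m2
  obtain ⟨a1, _, a3, _, a5, a6, a7⟩ := m1
  obtain ⟨_, b2, _, b4, _, _, _⟩ := m2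
  refine ⟨?_, ?_, ?_, ?_, ?_, ?_, ?_⟩
  · rcases mul_eq_zero.mp a1 with h | h; exact h; exact absurd h hw1
  · rcases mul_eq_zero.mp b2 with h | h; exact h; exact absurd h hw2
  · rcases mul_eq_zero.mp a3 with h | h; exact h; exact absurd h hw1
  · rcases mul_eq_zero.mp b4 with h | h; exact h; exact absurd h hw2
  · rcases mul_eq_zero.mp a5 with h | h; exact h; exact absurd h hw1
  · rcases mul_eq_zero.mp a6 with h | h; exact h; exact absurd h hw1
  · have := sub_eq_zero.mpr a7
    rw [← sub_mul] at this
    rcases mul_eq_zero.mp this with h | h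
    · exact sub_eq_zero.mp h
    · exact absurd h hw1
end

section
/- Under the hypotheses that x θ'² sin θ + θ' sin²θ = (−a sin²θ + μ)x² and θ' = γ x²/(α x³ + β) with α = −5a sin²θ + μ, β = 4 sin³θ, γ = −2a sin³θ + 3μ sin θ, the function x satisfies the algebraic relation a₆ x⁶ + a₃ x³ + a₀ = 0, where a₃(θ) = 26a² sin⁷θ − 19aμ sin⁵θ − 4μ² sin³θ and a₀(θ) = −8a sin⁸θ + 4μ sin⁶θ, and a₆(θ) is a polynomial in cos²θ of degree 3 with leading coefficient 25a³ (explicitly a₆ = 25a³cos⁶θ + 5a²(15λ−8μ)cos⁴θ + a(5a−μ)(4μ−15λ)cos²θ + λ(5a−μ)² with λ = μ − a). -/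
open Real

/-- From (3.17) and (3.21) one obtains the algebraic relation a₆x⁶ + a₃x³ + a₀ = 0. -/
theorem stmt9 (x θ : ℝ → ℝ) (a μ : ℝ)
    (hxpos : ∀ s, 0 < x s)
    (hsin : ∀ s, Real.sin (θ s) ≠ 0)
    (hne : ∀ s, (-5 * a * Real.sin (θ s) ^ 2 + μ) * (x s) ^ 3 +
      4 * Real.sin (θ s) ^ 3 ≠ 0)
    (h317 : ∀ s,
      x s * (deriv θ s) ^ 2 * Real.sin (θ s) + deriv θ s * Real.sin (θ s) ^ 2 =
        (-a * Real.sin (θ s) ^ 2 + μ) * (x s) ^ 2)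
    (h321 : ∀ s, deriv θ s =
      (-2 * a * Real.sin (θ s) ^ 3 + 3 * μ * Real.sin (θ s)) * (x s) ^ 2 /
        ((-5 * a * Real.sin (θ s) ^ 2 + μ) * (x s) ^ 3 + 4 * Real.sin (θ s) ^ 3)) :
    ∀ s,
      (25 * a ^ 3 * Real.cos (θ s) ^ 6 +
        5 * a ^ 2 * (15 * (μ - a) - 8 * μ) * Real.cos (θ s) ^ 4 +
        a * (5 * a - μ) * (4 * μ - 15 * (μ - a)) * Real.cos (θ s) ^ 2 +
        (μ - a) * (5 * a - μ) ^ 2) * (x s) ^ 6 +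
      (26 * a ^ 2 * Real.sin (θ s) ^ 7 - 19 * a * μ * Real.sin (θ s) ^ 5 -
        4 * μ ^ 2 * Real.sin (θ s) ^ 3) * (x s) ^ 3 +
      (-8 * a * Real.sin (θ s) ^ 8 + 4 * μ * Real.sin (θ s) ^ 6) = 0 := by
  intro s
  set S := Real.sin (θ s) with hS
  set C := Real.cos (θ s) with hC
  set X := x s with hX
  set t := deriv θ s with ht
  set γ : ℝ := -2 * a * S ^ 3 + 3 * μ * S with hγ
  set D : ℝ := (-5 * a * S ^ 2 + μ) * X ^ 3 + 4 * S ^ 3 with hD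
  have hX2 : X ^ 2 ≠ 0 := pow_ne_zero _ (hxpos s).ne'
  have hDne : D ≠ 0 := hne s
  have htD : t * D = γ * X ^ 2 := by
    rw [ht, h321 s, hD, hγ, hX, hS]; exact div_mul_cancel₀ _ (hne s)
  have hE : x s * t ^ 2 * S + t * S ^ 2 = (-a * S ^ 2 + μ) * X ^ 2 := h317 s
  have hP : X * (γ * X ^ 2) ^ 2 * S + (γ * X ^ 2) * S ^ 2 * D =
      (-a * S ^ 2 + μ) * X ^ 2 * D ^ 2 := by
    linear_combination D ^ 2 * hE - (X * S * (γ * X ^ 2 + t * D) + S ^ 2 * D) * htD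
  have hpy : S ^ 2 + C ^ 2 = 1 := sin_sq_add_cos_sq (θ s)
  have h2 : X ^ 2 * ((25 * a ^ 3 * C ^ 6 +
        5 * a ^ 2 * (15 * (μ - a) - 8 * μ) * C ^ 4 +
        a * (5 * a - μ) * (4 * μ - 15 * (μ - a)) * C ^ 2 +
        (μ - a) * (5 * a - μ) ^ 2) * X ^ 6 +
      (26 * a ^ 2 * S ^ 7 - 19 * a * μ * S ^ 5 -
        4 * μ ^ 2 * S ^ 3) * X ^ 3 +
      (-8 * a * S ^ 8 + 4 * μ * S ^ 6)) = 0 := by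
    linear_combination (-1 : ℝ) * hP +
      (X ^ 8 * (25 * a ^ 3 * (C ^ 4 + C ^ 2 * (1 - S ^ 2) + (1 - S ^ 2) ^ 2) +
        5 * a ^ 2 * (15 * (μ - a) - 8 * μ) * (C ^ 2 + (1 - S ^ 2)) +
        a * (5 * a - μ) * (4 * μ - 15 * (μ - a)))) * hpy
  rcases mul_eq_zero.mp h2 with h | h
  · exact absurd h hX2
  · exact h
end

section
/- If a nonzero polynomial p ∈ ℝ[X] vanishes on a set of the form sin(θ(I)) where θ(I) contains a nontrivial interval (so sin θ takes infinitely many values), then p = 0. Consequently, if a₆c₀² − a₃c₀c₃ + a₀c₃² = 0 holds identically as a polynomial identity in sin θ with leading term −17349480000·a¹³·sin⁴⁰θ, and sin θ takes infinitely many values, then a = 0. -/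
open Real Polynomial

/-- A polynomial vanishing on the infinitely many values of sin θ is zero; hence from the
    leading coefficient −17349480000·a¹³ of the degree-40 identity, a = 0. -/
theorem stmt11 (a : ℝ) (p : Polynomial ℝ) (θ : ℝ → ℝ) (I : Set ℝ)
    (hinf : ((fun s => Real.sin (θ s)) '' I).Infinite)
    (hdeg : p.natDegree ≤ 40)
    (hlead : p.coeff 40 = -17349480000 * a ^ 13)
    (hvan : ∀ s ∈ I, p.eval (Real.sin (θ s)) = 0) :
    p = 0 ∧ a = 0 := by
  have hp : p = 0 := by
    apply p.eq_zero_of_infinite_isRoot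
    apply hinf.mono
    rintro x ⟨s, hs, rfl⟩
    exact hvan s hs
  refine ⟨hp, ?_⟩
  have : (0 : ℝ) = -17349480000 * a ^ 13 := by
    rw [← hlead, hp, Polynomial.coeff_zero]
  have ha : a ^ 13 = 0 := by linarith
  exact pow_eq_zero_iff (by norm_num) |>.mp ha
end
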